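/- Let the column index set of C be partitioned into S and S̄, let φ* satisfy the normal equation (CᵀC + λI)φ* = CᵀY with λ > 0, let ψ* ∈ ℝ^{S̄} be arbitrary, and let φ̂ be the vector equal to 0 on S and ψ* on S̄. Then the loss increase satisfies ΔL = L(φ̂) − L(φ*) ≥ λ‖φ*_S‖², where φ*_S is the restriction of φ* to the coordinates in S; in particular ΔL > 0 whenever φ*_S ≠ 0, so pruning the coordinates in S strictly increases the ridge loss by an amount growing with ‖φ*_S‖. -/

import Mathlib

/-!
Expand `L(φ* + d)` around the ridge solution: the normal equation says exactly that the cross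
term `2 ((Cφ* − Y) ⬝ Cd + λ φ* ⬝ d)` vanishes, so `L(φ* + d) − L(φ*) = ‖Cd‖² + λ‖d‖²`.
For `d = φ̂ − φ*` the restriction of `d` to `S` is `−φ*_S`, whence `λ‖d‖² ≥ λ‖φ*_S‖²`.
-/

open Matrix

namespace Matrix

variable {ι : Type*} [Fintype ι]

theorem sum_sq_eq_dotProduct_self {R : Type*} [Semiring R] (v : ι → R) :
    ∑ i, v i ^ 2 = v ⬝ᵥ v := by
  simp only [dotProduct, sq]

theorem add_dotProduct_add_self {R : Type*} [CommRing R] (x y : ι → R) :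
    (x + y) ⬝ᵥ (x + y) = x ⬝ᵥ x + 2 * (x ⬝ᵥ y) + y ⬝ᵥ y := by
  rw [add_dotProduct, dotProduct_add, dotProduct_add, dotProduct_comm y x]
  ring

theorem dotProduct_self_nonneg {R : Type*} [Ring R] [LinearOrder R] [IsStrictOrderedRing R]
    (v : ι → R) : 0 ≤ v ⬝ᵥ v :=
  Finset.sum_nonneg fun i _ => mul_self_nonneg (v i)

theorem dotProduct_self_pos {R : Type*} [Ring R] [LinearOrder R] [IsStrictOrderedRing R]
    {v : ι → R} (hv : v ≠ 0) : 0 < v ⬝ᵥ v :=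
  (dotProduct_self_nonneg v).lt_of_ne' (dotProduct_self_eq_zero.not.mpr hv)

end Matrix

section Ridge

variable {m n R : Type*} [Fintype m] [Fintype n] [CommRing R]

def ridgeLoss (C : Matrix m n R) (Y : m → R) (lam : R) (φ : n → R) : R :=
  (C *ᵥ φ - Y) ⬝ᵥ (C *ᵥ φ - Y) + lam * (φ ⬝ᵥ φ)

theorem transpose_mulVec_residual_of_normal [DecidableEq n] {C : Matrix m n R} {Y : m → R}
    {lam : R} {φ : n → R} (hnormal : (Cᵀ * C + lam • (1 : Matrix n n R)) *ᵥ φ = Cᵀ *ᵥ Y) :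
    Cᵀ *ᵥ (C *ᵥ φ - Y) = -(lam • φ) := by
  rw [add_mulVec, smul_mulVec, one_mulVec, ← mulVec_mulVec] at hnormal
  rw [mulVec_sub, ← hnormal]
  abel

theorem ridgeLoss_add_sub_of_normal [DecidableEq n] {C : Matrix m n R} {Y : m → R} {lam : R}
    {φ : n → R} (hnormal : (Cᵀ * C + lam • (1 : Matrix n n R)) *ᵥ φ = Cᵀ *ᵥ Y) (d : n → R) :
    ridgeLoss C Y lam (φ + d) - ridgeLoss C Y lam φ = (C *ᵥ d) ⬝ᵥ (C *ᵥ d) + lam * (d ⬝ᵥ d) := by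
  have hcross : (C *ᵥ φ - Y) ⬝ᵥ (C *ᵥ d) = -(lam * (φ ⬝ᵥ d)) := by
    rw [dotProduct_mulVec, ← mulVec_transpose, transpose_mulVec_residual_of_normal hnormal,
      neg_dotProduct, smul_dotProduct, smul_eq_mul]
  have hresidual : C *ᵥ (φ + d) - Y = (C *ᵥ φ - Y) + C *ᵥ d := by
    rw [mulVec_add]
    abel
  rw [ridgeLoss, ridgeLoss, hresidual, add_dotProduct_add_self, add_dotProduct_add_self, hcross]
  ring

end Ridge

theorem sum_inl_sq_le_dotProduct_self {S T R : Type*} [Fintype S] [Fintype T] [Ring R]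
    [LinearOrder R] [IsStrictOrderedRing R] (v : S ⊕ T → R) :
    ∑ s, v (Sum.inl s) ^ 2 ≤ v ⬝ᵥ v := by
  rw [← sum_sq_eq_dotProduct_self, Fintype.sum_sum_type]
  exact le_add_of_nonneg_right (Finset.sum_nonneg fun t _ => sq_nonneg (v (Sum.inr t)))

/-- Let the column index set of `C` be partitioned into `S` and `S̄`, let `φ*`
satisfy the normal equation `(Cᵀ C + λ I) φ* = Cᵀ Y` with `λ > 0`, let `ψ* ∈ ℝ^S̄` be arbitrary,
and let `φ̂` be the vector equal to `0` on `S` and `ψ*` on `S̄`. Then the loss increase satisfies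
`ΔL = L(φ̂) − L(φ*) ≥ λ ‖φ*_S‖²`; in particular `ΔL > 0` whenever `φ*_S ≠ 0`. -/
theorem pruning_loss_increase_lower_bound (m : ℕ) (S Sbar : Type)
    [Fintype S] [Fintype Sbar] [DecidableEq S] [DecidableEq Sbar]
    (C : Matrix (Fin m) (S ⊕ Sbar) ℝ) (Y : Fin m → ℝ) (lam : ℝ) (hlam : 0 < lam)
    (L : (S ⊕ Sbar → ℝ) → ℝ)
    (hL : ∀ φ, L φ = (∑ i, (C *ᵥ φ - Y) i ^ 2) + lam * ∑ j, φ j ^ 2)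
    (φstar : S ⊕ Sbar → ℝ)
    (hnormal : (Cᵀ * C + lam • (1 : Matrix (S ⊕ Sbar) (S ⊕ Sbar) ℝ)) *ᵥ φstar = Cᵀ *ᵥ Y)
    (ψstar : Sbar → ℝ)
    (φhat : S ⊕ Sbar → ℝ) (hφhat : φhat = Sum.elim (fun _ => 0) ψstar) :
    lam * (∑ s : S, φstar (Sum.inl s) ^ 2) ≤ L φhat - L φstar ∧
      ((fun s : S => φstar (Sum.inl s)) ≠ 0 → 0 < L φhat - L φstar) := by
  have hL' : L = ridgeLoss C Y lam := funext fun φ => by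
    rw [hL, ridgeLoss, sum_sq_eq_dotProduct_self, sum_sq_eq_dotProduct_self]
  set d := φhat - φstar
  have hΔ : L φhat - L φstar = (C *ᵥ d) ⬝ᵥ (C *ᵥ d) + lam * (d ⬝ᵥ d) := by
    rw [hL', ← ridgeLoss_add_sub_of_normal hnormal d, add_sub_cancel]
  have hdS : ∑ s : S, φstar (Sum.inl s) ^ 2 ≤ d ⬝ᵥ d := by
    simpa [d, hφhat] using sum_inl_sq_le_dotProduct_self d
  have hbound : lam * (∑ s : S, φstar (Sum.inl s) ^ 2) ≤ L φhat - L φstar :=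
    calc lam * (∑ s : S, φstar (Sum.inl s) ^ 2) ≤ lam * (d ⬝ᵥ d) := by gcongr
      _ ≤ (C *ᵥ d) ⬝ᵥ (C *ᵥ d) + lam * (d ⬝ᵥ d) :=
        le_add_of_nonneg_left (dotProduct_self_nonneg _)
      _ = L φhat - L φstar := hΔ.symm
  refine ⟨hbound, fun hne => lt_of_lt_of_le (mul_pos hlam ?_) hbound⟩
  rw [sum_sq_eq_dotProduct_self (fun s : S => φstar (Sum.inl s))]
  exact dotProduct_self_pos hne
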